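/- For every natural number n ≥ 1 and every real t, Σ_{r=1}^{2n+1} ((−2n)^r / r!) Σ_{(k_1,…,k_r)} [B_{k_1}(t) ⋯ B_{k_r}(t)] / (k_1 ⋯ k_r) = 0, where the inner sum ranges over all r-tuples (k_1,…,k_r) of positive integers with k_1 + ⋯ + k_r = 2n+1. (Equivalently, this holds as an identity of polynomials in t.) -/

import Mathlib

open Finset

/-- The `k`-th Bernoulli polynomial evaluated at a real number `t`
(generating function `u e^{tu}/(e^u - 1)`, so `B 1 t = t - 1/2`). -/
noncomputable def bern (k : ℕ) (t : ℝ) : ℝ :=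
  Polynomial.aeval t (Polynomial.bernoulli k)

/-!
Put `F(u) = ∑_{j ≥ 1} B_j(t) u^j / j`. The inner sum is the coefficient of `u^{2n+1}` in
`F(u)^r`, so the left-hand side is the coefficient `E_{2n+1}(x)` of `u^{2n+1}` in `exp(x F(u))` at
`x = -2n` (the term `r = 0` is zero). Since `∂_t (B_j / j) = B_{j-1}`, differentiating in `t`
gives `∂_t E_{m+1}(x) = (x + m) E_m(x)`, so `E_{2n+1}(-2n)` does not depend on `t`. At `t = 1/2`
it vanishes: every composition of the odd number `2n+1` has an odd part `j`, and
`B_j(1/2) = 0` for odd `j`.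
-/

open Polynomial

def compositionTuples (r m : ℕ) : Finset (Fin r → ℕ) :=
  (Finset.Nat.antidiagonalTuple r m).filter fun k => ∀ i, 1 ≤ k i

theorem mem_compositionTuples {r m : ℕ} {k : Fin r → ℕ} :
    k ∈ compositionTuples r m ↔ ∑ i, k i = m ∧ ∀ i, 1 ≤ k i := by
  simp [compositionTuples, Finset.Nat.mem_antidiagonalTuple]

theorem sum_update_add_self {ι M : Type*} [Fintype ι] [DecidableEq ι] [AddCommMonoid M]
    (f : ι → M) (i : ι) (b : M) : ∑ j, Function.update f i b j + f i = b + ∑ j, f j := by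
  rw [sum_update_of_mem (mem_univ i), sdiff_singleton_eq_erase, add_assoc,
    sum_erase_add _ _ (mem_univ i)]

section Bijections

variable {M : Type*} [AddCommMonoid M] {r m : ℕ}

theorem sum_compositionTuples_filter_eq_one (i : Fin (r + 1)) (g : (Fin (r + 1) → ℕ) → M) :
    ∑ k ∈ (compositionTuples (r + 1) (m + 1)).filter (fun k => k i = 1), g k =
      ∑ k ∈ compositionTuples r m, g (Fin.insertNth (α := fun _ => ℕ) i 1 k) := by
  refine (sum_nbij' (Fin.insertNth i 1) (Fin.removeNth i) ?_ ?_ ?_ ?_ fun _ _ => rfl).symm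
  · intro k hk
    simp only [mem_filter, mem_compositionTuples, Fin.insertNth_apply_same, and_true,
      Fin.sum_univ_succAbove _ i, Fin.insertNth_apply_succAbove,
      Fin.forall_iff_succAbove i] at hk ⊢
    exact ⟨by omega, le_rfl, hk.2⟩
  · intro k hk
    simp only [mem_filter, mem_compositionTuples, Fin.sum_univ_succAbove k i] at hk ⊢
    obtain ⟨⟨hsum, hpos⟩, hki⟩ := hk
    exact ⟨by simp only [Fin.removeNth]; omega, fun j => hpos _⟩
  · intro k _
    exact Fin.removeNth_insertNth (α := fun _ => ℕ) i 1 k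
  · intro k hk
    have h := Fin.insertNth_self_removeNth i k
    rwa [(mem_filter.mp hk).2] at h

theorem sum_compositionTuples_filter_ne_one (i : Fin r) (g : (Fin r → ℕ) → M) :
    ∑ k ∈ (compositionTuples r (m + 1)).filter (fun k => k i ≠ 1), g k =
      ∑ k ∈ compositionTuples r m, g (Function.update k i (k i + 1)) := by
  refine (sum_nbij' (fun k => Function.update k i (k i + 1))
    (fun k => Function.update k i (k i - 1)) ?_ ?_ ?_ ?_ fun _ _ => rfl).symm
  · intro k hk
    simp only [mem_filter, mem_compositionTuples, Function.forall_update_iff,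
      Function.update_self] at hk ⊢
    obtain ⟨hsum, hpos⟩ := hk
    have := sum_update_add_self k i (k i + 1)
    have := hpos i
    exact ⟨⟨by omega, by omega, fun j _ => hpos j⟩, by omega⟩
  · intro k hk
    simp only [mem_filter, mem_compositionTuples, Function.forall_update_iff] at hk ⊢
    obtain ⟨⟨hsum, hpos⟩, hki⟩ := hk
    have := sum_update_add_self k i (k i - 1)
    have := hpos i
    exact ⟨by omega, by omega, fun j _ => hpos j⟩
  · intro k _
    simp
  · intro k hk
    have := (mem_compositionTuples.mp (mem_filter.mp hk).1).2 i
    have := (mem_filter.mp hk).2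
    simp only [Function.update_self, Function.update_idem]
    rw [Nat.sub_add_cancel (by omega), Function.update_eq_self]

end Bijections

section CompositionSum

variable {R : Type*} [CommSemiring R]

def compositionSum (f : ℕ → R) (r m : ℕ) : R :=
  ∑ k ∈ compositionTuples r m, ∏ i, f (k i)

theorem compositionSum_zero_left {m : ℕ} (hm : m ≠ 0) (f : ℕ → R) :
    compositionSum f 0 m = 0 :=
  sum_eq_zero fun k hk => absurd (mem_compositionTuples.mp hk).1.symm (by simpa using hm)

theorem compositionSum_of_lt {r m : ℕ} (h : m < r) (f : ℕ → R) :
    compositionSum f r m = 0 := by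
  refine sum_eq_zero fun k hk => absurd h ?_
  obtain ⟨hsum, hpos⟩ := mem_compositionTuples.mp hk
  simpa [← hsum] using sum_le_sum fun i (_ : i ∈ univ) => hpos i

theorem map_compositionSum {S F : Type*} [CommSemiring S] [FunLike F R S] [RingHomClass F R S]
    (φ : F) (f : ℕ → R) (r m : ℕ) :
    φ (compositionSum f r m) = compositionSum (φ ∘ f) r m := by
  simp [compositionSum, map_sum, map_prod]

theorem compositionSum_of_odd {f : ℕ → R} (hf : ∀ j, Odd j → f j = 0) {m : ℕ} (hm : Odd m)
    (r : ℕ) : compositionSum f r m = 0 := by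
  refine sum_eq_zero fun k hk => ?_
  obtain ⟨i, hi⟩ : ∃ i, Odd (k i) := by
    by_contra! h
    simp only [Nat.not_odd_iff_even] at h
    rw [← (mem_compositionTuples.mp hk).1, ← Nat.not_even_iff_odd] at hm
    exact hm (Finset.even_sum _ fun i _ => h i)
  exact prod_eq_zero (mem_univ i) (hf _ hi)

theorem derivative_prod_fin {r : ℕ} (g : Fin (r + 1) → R[X]) :
    derivative (∏ i, g i) = ∑ i, derivative (g i) * ∏ j, g (i.succAbove j) := by
  rw [derivative_prod_finset]
  refine sum_congr rfl fun i _ => ?_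
  rw [mul_comm, Fin.univ_succAbove r i, erase_cons, prod_map]
  rfl

/-- Differentiating a factor `f (k i)` either deletes the part `k i = 1` or lowers a part
`k i ≥ 2` by one at the cost of the factor `k i - 1`. -/
theorem derivative_compositionSum {f : ℕ → R[X]} (hf₁ : derivative (f 1) = 1)
    (hf : ∀ j ≠ 0, derivative (f (j + 1)) = j * f j) (r m : ℕ) :
    derivative (compositionSum f (r + 1) (m + 1)) =
      (r + 1) * compositionSum f r m + m * compositionSum f (r + 1) m := by
  have hsplit (i : Fin (r + 1)) :
      ∑ k ∈ compositionTuples (r + 1) (m + 1),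
          derivative (f (k i)) * ∏ j, f (k (i.succAbove j)) =
        compositionSum f r m +
          ∑ k ∈ compositionTuples (r + 1) m, (k i : R[X]) * ∏ j, f (k j) := by
    rw [← sum_filter_add_sum_filter_not _ (fun k => k i = 1),
      sum_compositionTuples_filter_eq_one, sum_compositionTuples_filter_ne_one]
    congr 1
    · simp [compositionSum, hf₁]
    · refine sum_congr rfl fun k hk => ?_
      have hki := (mem_compositionTuples.mp hk).2 i
      simp only [Function.update_self, Function.update_of_ne (Fin.succAbove_ne i _),
        hf _ (Nat.one_le_iff_ne_zero.mp hki), Fin.prod_univ_succAbove _ i, mul_assoc]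
  calc derivative (compositionSum f (r + 1) (m + 1))
      = ∑ i, ∑ k ∈ compositionTuples (r + 1) (m + 1),
          derivative (f (k i)) * ∏ j, f (k (i.succAbove j)) := by
        simp only [compositionSum, derivative_sum, derivative_prod_fin]
        exact sum_comm
    _ = ∑ i, compositionSum f r m +
          ∑ k ∈ compositionTuples (r + 1) m, (∑ i, k i : ℕ) * ∏ j, f (k j) := by
        simp only [hsplit, sum_add_distrib, Nat.cast_sum, sum_mul]
        rw [sum_comm]
    _ = (r + 1) * compositionSum f r m + m * compositionSum f (r + 1) m := by
        rw [sum_const, card_univ, Fintype.card_fin, nsmul_eq_mul, Nat.cast_succ]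
        congr 1
        rw [compositionSum, mul_sum]
        exact sum_congr rfl fun k hk => by rw [(mem_compositionTuples.mp hk).1]

end CompositionSum

section ExpCompositionSum

open Nat

variable {K : Type*} [Field K] [CharZero K]

/-- The coefficient of `u ^ m` in `exp (x * ∑_{j ≥ 1} f j * u ^ j)`. -/
noncomputable def expCompositionSum (f : ℕ → K[X]) (x : K) (m : ℕ) : K[X] :=
  ∑ r ∈ range (m + 1), C (x ^ r / r !) * compositionSum f r m

theorem derivative_expCompositionSum {f : ℕ → K[X]} (hf₁ : derivative (f 1) = 1)
    (hf : ∀ j ≠ 0, derivative (f (j + 1)) = j * f j) (x : K) (m : ℕ) :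
    derivative (expCompositionSum f x (m + 1)) = C (x + m) * expCompositionSum f x m := by
  set a : ℕ → K[X] := fun r => C (x ^ r / r !) * compositionSum f r m with ha
  have hterm (s : ℕ) : C (x ^ (s + 1) / (s + 1)!) *
      ((s + 1) * compositionSum f s m + m * compositionSum f (s + 1) m) =
        C x * a s + C (m : K) * a (s + 1) := by
    have hcoeff : x ^ (s + 1) / (s + 1)! * (s + 1) = x * (x ^ s / s !) := by
      rw [factorial_succ]; push_cast; field_simp; ring
    rw [mul_add]
    congr 1
    · rw [← mul_assoc, ← map_natCast C, ← map_one C, ← map_add, ← C_mul, hcoeff, C_mul,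
        mul_assoc]
    · rw [← map_natCast C]
      ring
  have hshift : ∑ s ∈ range (m + 1), a (s + 1) = expCompositionSum f x m - a 0 := by
    have h := sum_range_succ' a (m + 1)
    have hlast : a (m + 1) = 0 := by
      simp only [ha, compositionSum_of_lt (lt_add_one m), mul_zero]
    rw [sum_range_succ, hlast, add_zero] at h
    rw [eq_sub_iff_add_eq, ← h]
    rfl
  have hfirst : C (m : K) * a 0 = 0 := by
    rcases eq_or_ne m 0 with rfl | hm
    · simp
    · simp [ha, compositionSum_zero_left hm]
  rw [expCompositionSum, sum_range_succ', compositionSum_zero_left m.succ_ne_zero, mul_zero,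
    add_zero, derivative_sum]
  simp only [derivative_C_mul, derivative_compositionSum hf₁ hf, hterm, sum_add_distrib,
    ← mul_sum, hshift]
  rw [mul_sub, hfirst, sub_zero]
  change C x * expCompositionSum f x m + _ = _
  rw [← add_mul, ← map_add]

end ExpCompositionSum

noncomputable def bernoulliDivIndex (j : ℕ) : ℚ[X] :=
  C (j : ℚ)⁻¹ * Polynomial.bernoulli j

theorem derivative_bernoulliDivIndex_succ (j : ℕ) :
    derivative (bernoulliDivIndex (j + 1)) = Polynomial.bernoulli j := by
  rw [bernoulliDivIndex, derivative_C_mul, derivative_bernoulli_add_one, ← mul_assoc,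
    show (j + 1 : ℚ[X]) = C ((j + 1 : ℕ) : ℚ) by simp, ← C_mul,
    inv_mul_cancel₀ (Nat.cast_ne_zero.mpr j.succ_ne_zero), C_1, one_mul]

theorem natCast_mul_bernoulliDivIndex {j : ℕ} (hj : j ≠ 0) :
    (j : ℚ[X]) * bernoulliDivIndex j = Polynomial.bernoulli j := by
  rw [bernoulliDivIndex, ← mul_assoc, ← map_natCast C, ← C_mul,
    mul_inv_cancel₀ (Nat.cast_ne_zero.mpr hj), C_1, one_mul]

theorem bernoulli_eval_half_of_odd {j : ℕ} (hj : Odd j) :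
    (Polynomial.bernoulli j).eval (1 / 2 : ℚ) = 0 := by
  have h := bernoulli_eval_one_sub j (1 / 2)
  rw [hj.neg_one_pow, show (1 : ℚ) - 1 / 2 = 1 / 2 by norm_num] at h
  linarith

theorem aeval_bernoulliDivIndex (t : ℝ) (j : ℕ) :
    aeval t (bernoulliDivIndex j) = bern j t / j := by
  simp [bernoulliDivIndex, bern, div_eq_inv_mul]

theorem expCompositionSum_bernoulliDivIndex (n : ℕ) :
    expCompositionSum bernoulliDivIndex (-(2 * n)) (2 * n + 1) = 0 := by
  have hconst : derivative (expCompositionSum bernoulliDivIndex (-(2 * n)) (2 * n + 1)) = 0 := by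
    rw [derivative_expCompositionSum (by simpa using derivative_bernoulliDivIndex_succ 0)
      (fun j hj => by rw [derivative_bernoulliDivIndex_succ, natCast_mul_bernoulliDivIndex hj])]
    simp
  have hhalf : (expCompositionSum bernoulliDivIndex (-(2 * n)) (2 * n + 1)).eval (1 / 2) = 0 := by
    refine (eval_finsetSum _ _ _).trans (sum_eq_zero fun r _ => ?_)
    rw [eval_mul, ← coe_evalRingHom, map_compositionSum,
      compositionSum_of_odd _ (odd_two_mul_add_one n), mul_zero]
    intro j hj
    rw [Function.comp_apply, coe_evalRingHom, bernoulliDivIndex, eval_mul,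
      bernoulli_eval_half_of_odd hj, mul_zero]
  rw [eq_C_of_derivative_eq_zero hconst] at hhalf ⊢
  rw [eval_C] at hhalf
  rw [hhalf, C_0]

theorem bernoulli_polynomial_identity_general
    (n : ℕ) (t : ℝ) :
    ∑ r ∈ Finset.Icc 1 (2 * n + 1),
        ((-(2 * (n : ℝ))) ^ r / (Nat.factorial r : ℝ)) *
          ∑ k ∈ (Finset.Nat.antidiagonalTuple r (2 * n + 1)).filter
              (fun k => ∀ i, 1 ≤ k i),
            (∏ i, bern (k i) t) / (∏ i, ((k i : ℕ) : ℝ)) = 0 := by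
  have h := congrArg (aeval t) (expCompositionSum_bernoulliDivIndex n)
  rw [expCompositionSum, range_eq_Ico, sum_eq_sum_Ico_succ_bot (by omega),
    compositionSum_zero_left (by omega), mul_zero, zero_add, Ico_add_one_right_eq_Icc,
    Nat.zero_add, map_sum, map_zero] at h
  rw [← h]
  refine sum_congr rfl fun r _ => ?_
  rw [map_mul, aeval_C, map_compositionSum, compositionSum, compositionTuples]
  congr 1
  · simp
  · refine sum_congr rfl fun k _ => ?_
    rw [← prod_div_distrib]
    exact prod_congr rfl fun i _ => (aeval_bernoulliDivIndex t (k i)).symm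

/-- the identity for Bernoulli polynomials
`∑_{r=1}^{2n+1} ((-2n)^r/r!) ∑_{k₁+⋯+k_r=2n+1, kᵢ≥1} (B_{k₁}(t)⋯B_{k_r}(t))/(k₁⋯k_r) = 0`,
the inner sum being over ordered tuples (compositions of `2n+1` into `r`
positive parts). -/
theorem bernoulli_polynomial_identity
    (n : ℕ) (hn : 1 ≤ n) (t : ℝ) :
    ∑ r ∈ Finset.Icc 1 (2 * n + 1),
        ((-(2 * (n : ℝ))) ^ r / (Nat.factorial r : ℝ)) *
          ∑ k ∈ (Finset.Nat.antidiagonalTuple r (2 * n + 1)).filter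
              (fun k => ∀ i, 1 ≤ k i),
            (∏ i, bern (k i) t) / (∏ i, ((k i : ℕ) : ℝ)) = 0 :=
  bernoulli_polynomial_identity_general n t
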